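/- arXiv:2411.03784 — 10 statements merged into one kernel-verified Lean document; each statement's English description precedes it below -/
import Mathlib

section
/- Let T be a string of length n over an alphabet Σ, let i, j ∈ [0, n) with i ≥ j, and let T' = T[0..i]·T[j..n-1] (a string of length n + (i - j + 1)). Then T' has an occurrence of T that is neither a prefix nor a suffix of T' (i.e., T occurs at some position k of T' with 0 < k < |T'| - n) if and only if T is periodic with period p = per(T) satisfying p < i - j + 1 and (i - j + 1) mod p = 0. -/
universe u

/-- `X` occurs at position `k` in `Y`, i.e. `Y[k..k+|X|-1] = X`. -/
def occursAt {α : Type u} (X Y : List α) (k : ℕ) : Prop :=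
  X <+: Y.drop k

/-- `p > 0` is a period of `P`: `P[a] = P[a+p]` for all `a ∈ [0, |P|-p)`. -/
def IsPeriod {α : Type u} (P : List α) (p : ℕ) : Prop :=
  0 < p ∧ ∀ (a : ℕ) (h : a + p < P.length),
    P.get ⟨a, lt_of_le_of_lt (Nat.le_add_right a p) h⟩ = P.get ⟨a + p, h⟩

/-- `per(P)`: the smallest period of `P`. -/
noncomputable def minPeriod {α : Type u} (P : List α) : ℕ :=
  sInf {p | IsPeriod P p}

section FW
variable {β : Type*}

/-- `p` is a period of `f` on `[0, m)`. -/
def POn (f : ℕ → β) (m p : ℕ) : Prop := ∀ a, a + p < m → f a = f (a + p)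

lemma POn.chain {f : ℕ → β} {m p : ℕ} (h : POn f m p) :
    ∀ (t a : ℕ), a + t * p < m → f a = f (a + t * p) := by
  intro t
  induction t with
  | zero => intro a _; simp
  | succ t ih =>
    intro a ha
    have h1 : a + t * p < m := by nlinarith [Nat.succ_mul t p]
    have h2 : f (a + t * p) = f (a + t * p + p) := h (a + t * p) (by
      have : a + t * p + p = a + (t + 1) * p := by ring
      omega)
    rw [ih a h1, h2]
    congr 1
    ring

lemma POn.chain' {f : ℕ → β} {m p a b : ℕ} (h : POn f m p) (hab : a ≤ b) (hb : b < m)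
    (hd : p ∣ b - a) : f a = f b := by
  obtain ⟨t, ht⟩ := hd
  have hb' : b = a + t * p := by rw [Nat.mul_comm] at ht; omega
  subst hb'
  exact h.chain t a hb

lemma POn.sub {f : ℕ → β} {m p q : ℕ} (hpq : p < q) (hm : p + q ≤ m)
    (h1 : POn f m p) (h2 : POn f m q) : POn f m (q - p) := by
  intro a ha
  by_cases hq : a + q < m
  · have e1 : f a = f (a + q) := h2 a hq
    have e2 : f (a + (q - p)) = f (a + (q - p) + p) := h1 _ (by omega)
    have : a + (q - p) + p = a + q := by omega
    rw [e1, e2, this]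
  · have hap : p ≤ a := by omega
    have e1 : f (a - p) = f (a - p + p) := h1 _ (by omega)
    have e2 : f (a - p) = f (a - p + q) := h2 _ (by omega)
    have e3 : a - p + p = a := by omega
    have e4 : a - p + q = a + (q - p) := by omega
    rw [e3] at e1; rw [e4] at e2
    rw [← e1, e2]

lemma fw_aux {f : ℕ → β} {m : ℕ} :
    ∀ (s p q : ℕ), p + q ≤ s → 0 < p → 0 < q → p + q ≤ m →
      POn f m p → POn f m q → POn f m (Nat.gcd p q) := by
  intro s
  induction s with
  | zero => intro p q hs hp hq; omega
  | succ s ih =>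
    intro p q hs hp hq hm h1 h2
    rcases lt_trichotomy p q with h | h | h
    · have := ih p (q - p) (by omega) hp (by omega) (by omega) h1 (h1.sub h hm h2)
      rwa [Nat.gcd_sub_self_right h.le] at this
    · subst h
      simpa [Nat.gcd_self] using h1
    · have := ih (p - q) q (by omega) (by omega) hq (by omega) (h2.sub h (by omega) h1) h2
      rwa [Nat.gcd_sub_self_left h.le] at this

lemma fw {f : ℕ → β} {m p q : ℕ} (hp : 0 < p) (hq : 0 < q) (hm : p + q ≤ m)
    (h1 : POn f m p) (h2 : POn f m q) : POn f m (Nat.gcd p q) :=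
  fw_aux (p + q) p q le_rfl hp hq hm h1 h2

/-- Extend a period from the window `[j, M)` to all of `[0, M)`, given period `k` on `[0,M)`. -/
lemma up_lemma {f : ℕ → β} {M j k g : ℕ} (hk : 0 < k) (hM : j + k + g ≤ M)
    (h1 : POn f M k) (hov : ∀ a, j ≤ a → a + g < M → f a = f (a + g)) :
    POn f M g := by
  have key : ∀ s a, j - a ≤ s → a + g < M → f a = f (a + g) := by
    intro s
    induction s with
    | zero => intro a hs ha; exact hov a (by omega) ha
    | succ s ih =>
      intro a hs ha
      by_cases hja : j ≤ a
      · exact hov a hja ha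
      · push_neg at hja
        have e1 : f a = f (a + k) := h1 a (by omega)
        have e2 : f (a + g) = f (a + g + k) := h1 (a + g) (by omega)
        have e3 : f (a + k) = f (a + k + g) := ih (a + k) (by omega) (by omega)
        have e4 : a + k + g = a + g + k := by ring
        rw [e1, e3, e4, ← e2]
  intro a ha
  exact key (j - a) a le_rfl ha

/-- Extend a period from window `[j, I)` to `[j, N)`, given period `e` on `[j, N)`. -/
lemma down_lemma {f : ℕ → β} {N j I e g : ℕ} (he : 0 < e) (hI : j + g + e ≤ I)
    (h2 : ∀ a, j ≤ a → a + e < N → f a = f (a + e))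
    (hov : ∀ a, j ≤ a → a + g < I → f a = f (a + g)) :
    ∀ a, j ≤ a → a + g < N → f a = f (a + g) := by
  have key : ∀ s a, a ≤ s → j ≤ a → a + g < N → f a = f (a + g) := by
    intro s
    induction s with
    | zero =>
      intro a hs hja ha
      have : a + g < I := by omega
      exact hov a hja this
    | succ s ih =>
      intro a hs hja ha
      by_cases hI' : a + g < I
      · exact hov a hja hI'
      · push_neg at hI'
        have hae : j + e ≤ a := by omega
        have e1 : f (a - e) = f (a - e + e) := h2 (a - e) (by omega) (by omega)
        have e2 : f (a + g - e) = f (a + g - e + e) := h2 (a + g - e) (by omega) (by omega)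
        have e3 : f (a - e) = f (a - e + g) := ih (a - e) (by omega) (by omega) (by omega)
        have e4 : a - e + e = a := by omega
        have e5 : a + g - e + e = a + g := by omega
        have e6 : a - e + g = a + g - e := by omega
        rw [e4] at e1
        rw [e5] at e2
        rw [e6] at e3
        rw [← e1, e3, e2]
  intro a hja ha
  exact key a a le_rfl hja ha

end FW

/-- `IsPeriod` in terms of `getElem?`. -/
lemma isPeriod_iff_pon {α : Type u} (T : List α) (n p : ℕ) (hT : T.length = n) :
    IsPeriod T p ↔ (0 < p ∧ POn (fun a => T[a]?) n p) := by
  constructor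
  · rintro ⟨hp, h⟩
    refine ⟨hp, ?_⟩
    intro a ha
    have h' := h a (by omega)
    simp only [List.get_eq_getElem] at h'
    show T[a]? = T[a + p]?
    rw [List.getElem?_eq_getElem (by omega), List.getElem?_eq_getElem (by omega)]
    exact congrArg some h'
  · rintro ⟨hp, h⟩
    refine ⟨hp, ?_⟩
    intro a ha
    have h' : T[a]? = T[a + p]? := h a (by omega)
    rw [List.getElem?_eq_getElem (by omega), List.getElem?_eq_getElem (by omega)] at h'
    simp only [List.get_eq_getElem]
    exact Option.some.inj h'

/-- Structural lemma: `T' = T[0..i]·T[j..n-1]` has an occurrence of `T` that is neither a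
prefix nor a suffix of `T'` iff `T` is periodic with period `p = per(T) < i-j+1` and
`(i-j+1) mod p = 0`. -/
theorem stmt0 {α : Type u} (T : List α) (n i j : ℕ)
    (hT : T.length = n) (hi : i < n) (hj : j < n) (hij : j ≤ i)
    (T' : List α) (hT' : T' = T.take (i + 1) ++ T.drop j) :
    (∃ k, 0 < k ∧ k + n < T'.length ∧ occursAt T T' k) ↔
      (2 * minPeriod T ≤ n ∧ minPeriod T < i - j + 1 ∧ (i - j + 1) % minPeriod T = 0) := by
  set f : ℕ → Option α := fun a => T[a]? with hf
  set d : ℕ := i - j + 1 with hd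
  have htklen : (T.take (i + 1)).length = i + 1 := by
    rw [List.length_take]; omega
  have hlen : T'.length = n + d := by
    rw [hT', List.length_append, htklen, List.length_drop]; omega
  have hup : ∀ m : ℕ, m < i + 1 → T'[m]? = T[m]? := by
    intro m hm
    rw [hT', List.getElem?_append_left (by omega), List.getElem?_take_of_lt hm]
  have hdown : ∀ m : ℕ, i + 1 ≤ m → T'[m]? = T[j + (m - (i + 1))]? := by
    intro m hm
    rw [hT', List.getElem?_append_right (by omega), htklen, List.getElem?_drop]
  have hOccElem : ∀ k, occursAt T T' k → ∀ a, a < n → T'[k + a]? = T[a]? := by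
    intro k hk a ha
    obtain ⟨t, ht⟩ := hk
    rw [← List.getElem?_drop, ← ht, List.getElem?_append_left (by omega)]
  have hMk : ∀ k, k + n ≤ T'.length → (∀ a, a < n → T'[k + a]? = T[a]?) → occursAt T T' k := by
    intro k hkl hall
    rw [occursAt, List.prefix_iff_eq_take]
    apply List.ext_getElem?
    intro a
    by_cases ha : a < n
    · rw [List.getElem?_take_of_lt (by omega), List.getElem?_drop, hall a ha]
    · rw [List.getElem?_eq_none (by omega), List.getElem?_eq_none]
      rw [List.length_take, List.length_drop]
      omega
  constructor
  · rintro ⟨k, hk0, hkn, hocc⟩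
    have hkd : k < d := by omega
    set e : ℕ := d - k with he
    have he0 : 0 < e := by omega
    have hE := hOccElem k hocc
    -- prefix period k
    have hpre : POn f (i + 1) k := by
      intro a ha
      have h1 := hE a (by omega)
      rw [hup (k + a) (by omega), Nat.add_comm k a] at h1
      exact h1.symm
    -- suffix period e
    have hsuf : ∀ b, j ≤ b → b + e < n → f b = f (b + e) := by
      intro b hb hbe
      have h1 := hE (b + e) (by omega)
      rw [hdown (k + (b + e)) (by omega)] at h1
      have hidx : j + (k + (b + e) - (i + 1)) = b := by omega
      rw [hidx] at h1
      simp only [hf]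
      exact h1
    set g : ℕ := Nat.gcd k e with hg
    have hg0 : 0 < g := Nat.gcd_pos_of_pos_left e hk0
    have hgk : g ≤ k := Nat.le_of_dvd hk0 (Nat.gcd_dvd_left k e)
    have hge : g ≤ e := Nat.le_of_dvd he0 (Nat.gcd_dvd_right k e)
    -- overlap has period g via Fine--Wilf
    have hov : ∀ a, j ≤ a → a + g < i + 1 → f a = f (a + g) := by
      have hovk : POn (fun x => f (j + x)) d k := by
        intro x hx
        have := hpre (j + x) (by omega)
        simpa [Nat.add_assoc] using this
      have hove : POn (fun x => f (j + x)) d e := by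
        intro x hx
        have := hsuf (j + x) (by omega) (by omega)
        simpa [Nat.add_assoc] using this
      have hgcd := fw hk0 he0 (by omega) hovk hove
      intro a hja ha
      have := hgcd (a - j) (by omega)
      rw [← hg] at this
      simp only at this
      have h1 : j + (a - j) = a := by omega
      have h2 : j + (a - j + g) = a + g := by omega
      rw [h1, h2] at this
      exact this
    have hpreg : POn f (i + 1) g := up_lemma hk0 (by omega) hpre hov
    have hsufg : ∀ a, j ≤ a → a + g < n → f a = f (a + g) :=
      down_lemma he0 (by omega) hsuf hov
    have hTg : POn f n g := by
      intro a ha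
      by_cases hc : a + g < i + 1
      · exact hpreg a hc
      · exact hsufg a (by omega) ha
    have hgper : IsPeriod T g := (isPeriod_iff_pon T n g hT).mpr ⟨hg0, hTg⟩
    have hne : {p | IsPeriod T p}.Nonempty := ⟨g, hgper⟩
    have hpmem : IsPeriod T (minPeriod T) := Nat.sInf_mem hne
    have hple : minPeriod T ≤ g := Nat.sInf_le hgper
    obtain ⟨hppos, hpPon⟩ := (isPeriod_iff_pon T n (minPeriod T) hT).mp hpmem
    have hgcd2 : POn f n (Nat.gcd (minPeriod T) g) := fw hppos hg0 (by omega) hpPon hTg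
    have hgcd2per : IsPeriod T (Nat.gcd (minPeriod T) g) :=
      (isPeriod_iff_pon T n _ hT).mpr ⟨Nat.gcd_pos_of_pos_left g hppos, hgcd2⟩
    have hle2 : minPeriod T ≤ Nat.gcd (minPeriod T) g := Nat.sInf_le hgcd2per
    have hle3 : Nat.gcd (minPeriod T) g ≤ minPeriod T :=
      Nat.le_of_dvd hppos (Nat.gcd_dvd_left _ _)
    have heq : Nat.gcd (minPeriod T) g = minPeriod T := le_antisymm hle3 hle2
    have hpdvdg : minPeriod T ∣ g := heq ▸ Nat.gcd_dvd_right (minPeriod T) g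
    have hpdvdk : minPeriod T ∣ k := hpdvdg.trans (Nat.gcd_dvd_left k e)
    have hpdvde : minPeriod T ∣ e := hpdvdg.trans (Nat.gcd_dvd_right k e)
    have hpdvdd : minPeriod T ∣ d := by
      have : d = k + e := by omega
      rw [this]; exact Nat.dvd_add hpdvdk hpdvde
    refine ⟨by omega, by omega, ?_⟩
    obtain ⟨c0, hc0⟩ := hpdvdd
    rw [hc0]
    exact Nat.mul_mod_right _ _
  · rintro ⟨h2p, hlt, hmod⟩
    have hd0 : 0 < d := by omega
    have hp0 : minPeriod T ≠ 0 := by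
      intro h
      rw [h, Nat.mod_zero] at hmod
      omega
    have hne : {p | IsPeriod T p}.Nonempty := by
      rcases Set.eq_empty_or_nonempty {p | IsPeriod T p} with h | h
      · exfalso; apply hp0; rw [minPeriod, h, Nat.sInf_empty]
      · exact h
    have hpmem : IsPeriod T (minPeriod T) := Nat.sInf_mem hne
    obtain ⟨hppos, hpPon⟩ := (isPeriod_iff_pon T n (minPeriod T) hT).mp hpmem
    set p : ℕ := minPeriod T with hp
    obtain ⟨c, hc⟩ : p ∣ d := Nat.dvd_of_mod_eq_zero hmod
    have hcomm : c * p = p * c := Nat.mul_comm c p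
    have hc2 : 2 ≤ c := by nlinarith
    have hcp : (c - 1) * p = d - p := by
      have := Nat.sub_mul c 1 p
      rw [this, Nat.one_mul]
      omega
    refine ⟨p, hppos, by omega, ?_⟩
    apply hMk p (by omega)
    intro a ha
    by_cases hcase : p + a < i + 1
    · rw [hup _ hcase]
      have := hpPon a (by omega)
      rw [Nat.add_comm p a]
      exact this.symm
    · rw [hdown _ (by omega)]
      have hidx : j + (p + a - (i + 1)) = a + p - d := by omega
      rw [hidx]
      have h5 := hpPon.chain (c - 1) (a + p - d) (by omega)
      have hidx2 : a + p - d + (c - 1) * p = a := by omega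
      rw [hidx2] at h5
      exact h5
end

section
/- Let T be a string of length n over an alphabet Σ, let i, j ∈ [0, n) with i ≥ j, and let T' = T[0..i]·T[j..n-1]. If T occurs at some position k of T' with 0 < k < |T'| - n (so the occurrence is neither a prefix nor a suffix of T'), then T is periodic and its smallest period p = per(T) satisfies p < i - j + 1 and p divides i - j + 1. -/
universe u

lemma isPeriod_iff' {α : Type u} (P : List α) (p : ℕ) :
    IsPeriod P p ↔ 0 < p ∧ ∀ a, a + p < P.length → P[a]? = P[a + p]? := by
  constructor
  · rintro ⟨hp, h⟩
    refine ⟨hp, fun a ha => ?_⟩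
    rw [List.getElem?_eq_getElem (by omega), List.getElem?_eq_getElem ha]
    exact congrArg some (by simpa [List.get_eq_getElem] using h a ha)
  · rintro ⟨hp, h⟩
    refine ⟨hp, fun a ha => ?_⟩
    have := h a ha
    rw [List.getElem?_eq_getElem (by omega : a < P.length),
      List.getElem?_eq_getElem ha] at this
    simpa [List.get_eq_getElem] using Option.some.inj this

lemma period_sub {α : Type u} (P : List α) (p q : ℕ) (hp : IsPeriod P p)
    (hq : IsPeriod P q) (hlt : p < q) (hn : p + q ≤ P.length) :
    IsPeriod P (q - p) := by
  rw [isPeriod_iff'] at hp hq ⊢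
  obtain ⟨hp0, hp⟩ := hp
  obtain ⟨hq0, hq⟩ := hq
  refine ⟨by omega, fun a ha => ?_⟩
  by_cases hc : a + q < P.length
  · have h1 := hq a hc
    have h2 := hp (a + q - p) (by omega)
    rw [show a + q - p + p = a + q by omega] at h2
    rw [show a + (q - p) = a + q - p by omega]
    exact h1.trans h2.symm
  · have hap : p ≤ a := by omega
    have h1 := hp (a - p) (by omega)
    rw [show a - p + p = a by omega] at h1
    have h2 := hq (a - p) (by omega)
    rw [show a - p + q = a + (q - p) by omega] at h2
    exact h1.symm.trans h2

lemma period_gcd_aux {α : Type u} (P : List α) :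
    ∀ s p q, p + q ≤ s → IsPeriod P p → IsPeriod P q → p + q ≤ P.length →
      IsPeriod P (Nat.gcd p q) := by
  intro s
  induction s with
  | zero => intro p q hs hp _ _; exact absurd hp.1 (by omega)
  | succ s ih =>
    intro p q hs hp hq hn
    rcases lt_trichotomy p q with h | h | h
    · have hp1 := hp.1
      have h1 := period_sub P p q hp hq h hn
      have h2 := ih p (q - p) (by omega) hp h1 (by omega)
      rwa [Nat.gcd_sub_self_right (le_of_lt h)] at h2
    · subst h
      simpa [Nat.gcd_self] using hp
    · have hq1 := hq.1
      have h1 := period_sub P q p hq hp h (by omega)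
      have h2 := ih q (p - q) (by omega) hq h1 (by omega)
      rw [Nat.gcd_sub_self_right (le_of_lt h)] at h2
      rwa [Nat.gcd_comm]

lemma period_gcd {α : Type u} (P : List α) (p q : ℕ) (hp : IsPeriod P p)
    (hq : IsPeriod P q) (hn : p + q ≤ P.length) : IsPeriod P (Nat.gcd p q) :=
  period_gcd_aux P (p + q) p q le_rfl hp hq hn

/-- Forward direction: an internal occurrence of `T` in `T'` forces `T` to be periodic with
`per(T) < i-j+1` and `per(T) ∣ i-j+1`. -/
theorem stmt1 {α : Type u} (T : List α) (n i j : ℕ)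
    (hT : T.length = n) (hi : i < n) (hj : j < n) (hij : j ≤ i)
    (T' : List α) (hT' : T' = T.take (i + 1) ++ T.drop j)
    (k : ℕ) (hk0 : 0 < k) (hkn : k + n < T'.length) (hocc : occursAt T T' k) :
    2 * minPeriod T ≤ n ∧ minPeriod T < i - j + 1 ∧ minPeriod T ∣ (i - j + 1) := by
  set d := i - j + 1 with hd
  have hdn : d ≤ n := by omega
  have hlt : (T.take (i + 1)).length = i + 1 := by
    rw [List.length_take]; omega
  have hlenT' : T'.length = n + d := by
    rw [hT', List.length_append, hlt, List.length_drop, hT]; omega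
  have hkd : k < d := by omega
  set e := d - k with he
  have he0 : 0 < e := by omega
  -- basic index facts about T'
  have htake : ∀ a, a ≤ i → T'[a]? = T[a]? := by
    intro a ha
    rw [hT', List.getElem?_append_left (by omega), List.getElem?_take_of_lt (by omega)]
  have hdrop : ∀ a, i + 1 ≤ a → T'[a]? = T[a - d]? := by
    intro a ha
    rw [hT', List.getElem?_append_right (by omega), List.getElem?_drop]
    congr 1
    rw [hlt]; omega
  -- the occurrence
  obtain ⟨s, hs⟩ := hocc
  have hocc' : ∀ m, m < n → T'[k + m]? = T[m]? := by
    intro m hm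
    have h1 : (T'.drop k)[m]? = T[m]? := by
      rw [← hs, List.getElem?_append_left (by omega)]
    rw [← h1, List.getElem?_drop]
  -- (A): partial period k on the prefix
  have hA : ∀ m, m + k ≤ i → T[m]? = T[m + k]? := by
    intro m hm
    rw [← hocc' m (by omega), htake (k + m) (by omega)]
    congr 1; omega
  -- (B'): partial period e on the suffix
  have hB : ∀ m, j + e ≤ m → m < n → T[m - e]? = T[m]? := by
    intro m hm1 hm2
    rw [← hocc' m hm2, hdrop (k + m) (by omega)]
    congr 1; omega
  -- measure for the induction
  set μ : ℕ → ℕ := fun m => if m < j - k then i + (j - k - m) else m with hμ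
  -- main claim: d is a period of T
  have key : ∀ N m, μ m < N → m + d < n → T[m]? = T[m + d]? := by
    intro N
    induction N with
    | zero => intro m h; omega
    | succ N ih =>
      intro m hmN hmd
      by_cases hc3 : i < m + k
      · -- case 3
        have hm1 : j + e ≤ m := by omega
        have h1 := hB m hm1 (by omega)
        have h2 := hB (m + d) (by omega) (by omega)
        rw [show m + d - e = m - e + d by omega] at h2
        have h3 : μ (m - e) < N := by
          have : ¬ (m - e < j - k) := by omega
          have h4 : ¬ (m < j - k) := by omega
          simp only [hμ, if_neg this, if_neg h4] at hmN ⊢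
          omega
        have h5 := ih (m - e) h3 (by omega)
        rw [← h1, ← h2, h5]
      · by_cases hc2 : m + k < j
        · -- case 2
          have h1 := hA m (by omega)
          have h2 := hA (m + d) (by omega)
          have h3 : μ (m + k) < N := by
            have h4 : m < j - k := by omega
            simp only [hμ, if_pos h4] at hmN
            by_cases h5 : m + k < j - k
            · simp only [hμ, if_pos h5]; omega
            · simp only [hμ, if_neg h5]; omega
          have h6 := ih (m + k) h3 (by omega)
          rw [h1, h2, show m + d + k = m + k + d by omega, h6]
        · -- case 1
          have h1 := hA m (by omega)
          have h2 := hB (m + d) (by omega) (by omega)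
          rw [show m + d - e = m + k by omega] at h2
          rw [h1, ← h2]
  have hdper : IsPeriod T d := by
    rw [isPeriod_iff']
    exact ⟨by omega, fun a ha => key (μ a + 1) a (by omega) (by omega)⟩
  rw [isPeriod_iff'] at hdper
  -- T is a prefix of T'
  have hpre : ∀ m, m < n → T'[m]? = T[m]? := by
    intro m hm
    by_cases hc : m ≤ i
    · exact htake m hc
    · rw [hdrop m (by omega)]
      have := hdper.2 (m - d) (by rw [hT]; omega)
      rw [show m - d + d = m by omega] at this
      exact this
  -- T occurs at d in T'
  have hsuf : ∀ m, m < n → T'[d + m]? = T[m]? := by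
    intro m hm
    by_cases hc : d + m ≤ i
    · rw [htake (d + m) hc, show d + m = m + d by omega]
      exact (hdper.2 m (by rw [hT]; omega)).symm
    · rw [hdrop (d + m) (by omega)]
      congr 1; omega
  -- k and e are periods of T
  have hkper : IsPeriod T k := by
    rw [isPeriod_iff']
    refine ⟨hk0, fun a ha => ?_⟩
    rw [hT] at ha
    rw [← hocc' a (by omega), hpre (k + a) (by omega)]
    congr 1; omega
  have heper : IsPeriod T e := by
    rw [isPeriod_iff']
    refine ⟨he0, fun a ha => ?_⟩
    rw [hT] at ha
    rw [← hocc' (a + e) (by omega), show k + (a + e) = d + a by omega,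
      hsuf a (by omega)]
  -- gcd k e is a period
  have hg : IsPeriod T (Nat.gcd k e) := period_gcd T k e hkper heper (by rw [hT]; omega)
  have hgk : Nat.gcd k e ≤ k := Nat.le_of_dvd hk0 (Nat.gcd_dvd_left k e)
  have hge : Nat.gcd k e ≤ e := Nat.le_of_dvd he0 (Nat.gcd_dvd_right k e)
  have hgd : Nat.gcd k e ∣ d := by
    have : k + e = d := by omega
    rw [← this]; exact Nat.dvd_add (Nat.gcd_dvd_left k e) (Nat.gcd_dvd_right k e)
  -- minimal period
  have hne : {p | IsPeriod T p}.Nonempty := ⟨_, hg⟩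
  have hmem : IsPeriod T (minPeriod T) := Nat.sInf_mem hne
  have hmin : ∀ p, IsPeriod T p → minPeriod T ≤ p := fun p hp => Nat.sInf_le hp
  set P := minPeriod T with hP
  have hPg : P ≤ Nat.gcd k e := hmin _ hg
  have hP0 : 0 < P := hmem.1
  -- P divides gcd k e
  have hPdvd : P ∣ Nat.gcd k e := by
    have hgcd2 : IsPeriod T (Nat.gcd P (Nat.gcd k e)) :=
      period_gcd T P (Nat.gcd k e) hmem hg (by rw [hT]; omega)
    have h1 : P ≤ Nat.gcd P (Nat.gcd k e) := hmin _ hgcd2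
    have h2 : Nat.gcd P (Nat.gcd k e) ∣ P := Nat.gcd_dvd_left _ _
    have h3 : Nat.gcd P (Nat.gcd k e) = P :=
      le_antisymm (Nat.le_of_dvd hP0 h2) h1
    rw [← h3]; exact Nat.gcd_dvd_right _ _
  refine ⟨by omega, by omega, dvd_trans hPdvd hgd⟩
end

section
/- Let T be a string of length n over an alphabet Σ, let i, j ∈ [0, n) with i ≥ j, and let T' = T[0..i]·T[j..n-1]. If T is periodic with smallest period p = per(T) satisfying p < i - j + 1 and p dividing i - j + 1, then T occurs at every position k·p of T' for every integer k with 0 ≤ k ≤ (i - j + 1)/p; in particular, T has at least three occurrences in T', and at least one occurrence that is neither a prefix nor a suffix of T'. -/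
universe u

lemma iter_per {α : Type u} {T : List α} {p : ℕ} (hp : IsPeriod T p) :
    ∀ t b (h : b + t * p < T.length), T[b]'(by omega) = T[b + t * p]'h := by
  intro t
  induction t with
  | zero => intro b h; simp
  | succ t ih =>
    intro b h
    have he : b + (t + 1) * p = (b + t * p) + p := by ring
    have h1 : (b + t * p) + p < T.length := by omega
    have h2 := hp.2 (b + t * p) h1
    simp only [List.get_eq_getElem] at h2
    have e := ih b (by omega)
    calc T[b]'(by omega) = T[b + t*p]'(by omega) := e
      _ = T[(b + t*p) + p]'h1 := h2
      _ = T[b + (t+1)*p]'(by omega) := by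
          congr 1
          omega

lemma iter_per' {α : Type u} {T : List α} {p : ℕ} (hp : IsPeriod T p)
    (x y : ℕ) (hy : y < T.length) (t : ℕ) (hxy : y = x + t * p) :
    T[x]'(by omega) = T[y]'hy := by
  subst hxy; exact iter_per hp t x hy

/-- Reverse direction: if `T` is periodic with `p = per(T) < i-j+1` and `p ∣ i-j+1`, then `T`
occurs at every position `k·p` of `T'` for `0 ≤ k ≤ (i-j+1)/p`; in particular `T` has at least
three occurrences in `T'` and at least one that is neither a prefix nor a suffix of `T'`. -/
theorem stmt2 {α : Type u} (T : List α) (n i j : ℕ)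
    (hT : T.length = n) (hi : i < n) (hj : j < n) (hij : j ≤ i)
    (T' : List α) (hT' : T' = T.take (i + 1) ++ T.drop j)
    (hper : 2 * minPeriod T ≤ n) (hlt : minPeriod T < i - j + 1)
    (hdvd : minPeriod T ∣ (i - j + 1)) :
    (∀ k : ℕ, k ≤ (i - j + 1) / minPeriod T → occursAt T T' (k * minPeriod T)) ∧
    (∃ k₁ k₂ k₃ : ℕ, k₁ < k₂ ∧ k₂ < k₃ ∧
      occursAt T T' k₁ ∧ occursAt T T' k₂ ∧ occursAt T T' k₃) ∧
    (∃ k, 0 < k ∧ k + n < T'.length ∧ occursAt T T' k) := by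
  set p := minPeriod T with hp_def
  have hne : {q | IsPeriod T q}.Nonempty :=
    ⟨T.length + 1, ⟨Nat.succ_pos _, fun a h => absurd h (by omega)⟩⟩
  have hp : IsPeriod T p := Nat.sInf_mem hne
  have hppos : 0 < p := hp.1
  set d := i - j + 1 with hd
  have hdn : d ≤ n := by omega
  have hdp : d / p * p = d := Nat.div_mul_cancel hdvd
  have hlen' : T'.length = n + d := by
    subst hT'
    simp only [List.length_append, List.length_take, List.length_drop, hT]
    omega
  -- main occurrence claim
  have main : ∀ k : ℕ, k * p ≤ d → occursAt T T' (k * p) := by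
    intro k hk
    have htake : (T'.drop (k * p)).take T.length = T := by
      apply List.ext_getElem
      · simp [hlen', hT]; omega
      · intro a h1 h2
        have ha : a < n := by rwa [hT] at h2
        have hm : k * p + a < T'.length := by omega
        have : ((T'.drop (k * p)).take T.length)[a]'h1 = T'[k * p + a]'hm := by
          simp [List.getElem_take, List.getElem_drop]
        rw [this]
        subst hT'
        have hlt1 : (T.take (i + 1)).length = i + 1 := by
          simp [hT]; omega
        by_cases hc : k * p + a < i + 1
        · rw [List.getElem_append_left (by omega)]
          rw [List.getElem_take]
          exact (iter_per' hp a (k*p+a) (by omega) k (by ring)).symm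
        · rw [List.getElem_append_right (by omega)]
          simp only [List.getElem_drop, hlt1]
          set b := k*p + a - d with hbdef
          have ht : (d/p - k) * p = d - k*p := by
            rw [Nat.sub_mul, hdp]
          have hab : a = b + (d/p - k) * p := by
            rw [ht]; omega
          have hkey := iter_per' hp b a h2 (d/p - k) hab
          rw [← hkey]
          congr 1
          omega
    have hpre : (T'.drop (k * p)).take T.length <+: T'.drop (k * p) :=
      List.take_prefix _ _
    rw [htake] at hpre
    exact hpre
  have h2d : 2 * p ≤ d := by
    obtain ⟨m, hm⟩ := hdvd
    rcases m with _ | _ | m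
    · omega
    · omega
    · nlinarith [hm]
  refine ⟨?_, ?_, ?_⟩
  · intro k hk
    apply main
    calc k * p ≤ (d / p) * p := Nat.mul_le_mul_right _ hk
      _ = d := hdp
  · refine ⟨0, p, 2 * p, hppos, by omega, ?_, ?_, ?_⟩
    · simpa using main 0 (by omega)
    · simpa using main 1 (by omega)
    · have := main 2 (by omega)
      simpa [mul_comm] using this
  · refine ⟨p, hppos, ?_, ?_⟩
    · omega
    · simpa using main 1 (by omega)
end

section
/- Let T be a string of length n over an alphabet Σ, let i, j ∈ [0, n) with i ≥ j, and let T' = T[0..i]·T[j..n-1]. If T is periodic with smallest period p = per(T) satisfying p < i - j + 1 and p dividing i - j + 1, then the set of positions at which T occurs in T' is exactly { k·p : k an integer, 0 ≤ k ≤ (i - j + 1)/p }; that is, the occurrence positions form a single arithmetic progression with first term 0, common difference p, and last term i - j + 1. -/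
universe u

lemma gcIdx {α : Type u} {l : List α} {a b : ℕ} (hab : a = b) (h : b < l.length) :
    l[a]'(hab ▸ h) = l[b]'h := by subst hab; rfl

lemma periodShiftAux {α : Type u} {T : List α} {p : ℕ} (hp : IsPeriod T p) :
    ∀ (q b c : ℕ) (hc : c = b + q * p) (h : c < T.length),
      T[b]'(by omega) = T[c]'h := by
  intro q
  induction q with
  | zero =>
    intro b c hc h
    have : b = c := by omega
    subst this; rfl
  | succ q ih =>
    intro b c hc h
    rw [Nat.succ_mul] at hc
    have hbp : b + p < T.length := by
      have hpp : 0 < p := hp.1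
      omega
    have h1 : T[b]'(by omega) = T[b + p]'hbp := by
      have := hp.2 b hbp
      simpa using this
    rw [h1]
    exact ih (b + p) c (by omega) h

lemma periodShift {α : Type u} {T : List α} {p : ℕ} (hp : IsPeriod T p) {b c : ℕ}
    (hc : p ∣ c) (h : b + c < T.length) : T[b]'(by omega) = T[b + c]'h := by
  obtain ⟨q, rfl⟩ := hc
  exact periodShiftAux hp q b (b + p * q) (by ring) h

/-- If `T` is periodic with `p = per(T) < i-j+1` and `p ∣ i-j+1`, then the set of positions
at which `T` occurs in `T'` is exactly `{ k·p : 0 ≤ k ≤ (i-j+1)/p }`: a single arithmetic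
progression with first term `0`, difference `p` and last term `i-j+1`. -/
theorem stmt3 {α : Type u} (T : List α) (n i j : ℕ)
    (hT : T.length = n) (hi : i < n) (hj : j < n) (hij : j ≤ i)
    (T' : List α) (hT' : T' = T.take (i + 1) ++ T.drop j)
    (hper : 2 * minPeriod T ≤ n) (hlt : minPeriod T < i - j + 1)
    (hdvd : minPeriod T ∣ (i - j + 1)) :
    ∀ m : ℕ, occursAt T T' m ↔ ∃ k : ℕ, k ≤ (i - j + 1) / minPeriod T ∧ m = k * minPeriod T := by
  set p := minPeriod T with hpdef
  set d := i - j + 1 with hddef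
  have hdn : d ≤ n := by omega
  have hnper : IsPeriod T n := ⟨by omega, fun a h => absurd h (by omega)⟩
  have hp : IsPeriod T p := Nat.sInf_mem (s := {p | IsPeriod T p}) ⟨n, hnper⟩
  have hp0 : 0 < p := hp.1
  have hmin : ∀ r, IsPeriod T r → p ≤ r := fun r hr => Nat.sInf_le hr
  have hlend : (T.take d).length = d := by simp; omega
  -- T' = T.take d ++ T
  have htake : T.take (i + 1) = T.take d ++ T.take j := by
    apply List.ext_getElem
    · simp; omega
    · intro a h1 h2
      have ha : a < i + 1 := by simp at h1; omega
      rw [List.getElem_take]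
      by_cases hc : a < d
      · rw [List.getElem_append_left (by rw [hlend]; omega)]
        rw [List.getElem_take]
      · rw [List.getElem_append_right (by rw [hlend]; omega)]
        rw [List.getElem_take]
        have key : T[a - d]'(by omega) = T[(a - d) + d]'(by omega) :=
          periodShift hp hdvd (by omega)
        calc T[a]'(by omega) = T[(a - d) + d]'(by omega) := gcIdx (by omega) (by omega)
        _ = T[a - d]'(by omega) := key.symm
        _ = T[a - (T.take d).length]'(by rw [hlend]; omega) := (gcIdx (by rw [hlend]) (by omega)).symm
  have hT'eq : T' = T.take d ++ T := by
    rw [hT', htake, List.append_assoc, List.take_append_drop]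
  subst hT'eq
  have hlen' : (T.take d ++ T).length = d + n := by
    simp; omega
  have hT'get1 : ∀ a (ha : a < d), (T.take d ++ T)[a]'(by omega) = T[a]'(by omega) := by
    intro a ha
    rw [List.getElem_append_left (by rw [hlend]; omega)]
    rw [List.getElem_take]
  have hT'get2 : ∀ a (ha : d ≤ a) (ha2 : a < d + n),
      (T.take d ++ T)[a]'(by omega) = T[a - d]'(by omega) := by
    intro a ha ha2
    rw [List.getElem_append_right (by rw [hlend]; omega)]
    exact gcIdx (by rw [hlend]) (by omega)
  intro m
  constructor
  · intro hocc
    have hmd : m ≤ d := by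
      have h1 := hocc.length_le
      simp only [List.length_drop, hlen', hT] at h1
      omega
    set e := d - m with hedef
    have hocc' : ∀ x (hx : x < n),
        T[x]'(by omega) = (T.take d ++ T)[m + x]'(by rw [hlen']; omega) := by
      intro x hx
      have hh : T[x]'(by omega) = ((T.take d ++ T).drop m)[x]'(by simp [hlen']; omega) :=
        hocc.getElem (by omega)
      rw [hh, List.getElem_drop]
    have h1 : ∀ x (hx : x + m < d), T[x]'(by omega) = T[x + m]'(by omega) := by
      intro x hx
      calc T[x]'(by omega) = (T.take d ++ T)[m + x]'(by rw [hlen']; omega) :=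
        hocc' x (by omega)
      _ = T[m + x]'(by omega) := hT'get1 (m + x) (by omega)
      _ = T[x + m]'(by omega) := gcIdx (by omega) (by omega)
    have h2 : ∀ x (hx : x + e < n), T[x]'(by omega) = T[x + e]'(by omega) := by
      intro x hx
      have hkey := hocc' (x + e) (by omega)
      rw [hT'get2 (m + (x + e)) (by omega) (by omega)] at hkey
      calc T[x]'(by omega) = T[m + (x + e) - d]'(by omega) := gcIdx (by omega) (by omega)
      _ = T[x + e]'(by omega) := hkey.symm.trans (gcIdx rfl (by omega))
    -- forward conclusion
    by_cases he : e = 0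
    · refine ⟨d / p, le_refl _, ?_⟩
      rw [Nat.div_mul_cancel hdvd]
      omega
    · have hpe : IsPeriod T e := by
        refine ⟨by omega, fun a hae => ?_⟩
        have := h2 a (by omega)
        simpa using this
      have hpee : p ≤ e := hmin e hpe
      set r := m % p with hrdef
      have hr0 : r = 0 := by
        by_contra hr
        have hrper : IsPeriod T r := by
          refine ⟨by omega, fun a har => ?_⟩
          have hTn : T.length = n := hT
          rw [hTn] at har
          set a₀ := a % p with ha0def
          have ha0 : a₀ < p := Nat.mod_lt a hp0
          have haeq : a = a₀ + p * (a / p) := by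
            rw [ha0def]; exact (Nat.mod_add_div a p).symm
          have s1 : T[a₀]'(by omega) = T[a]'(by omega) := by
            calc T[a₀]'(by omega) = T[a₀ + p * (a / p)]'(by omega) :=
              periodShift hp ⟨a / p, rfl⟩ (by omega)
            _ = T[a]'(by omega) := gcIdx (by omega) (by omega)
          have s2 : T[a₀ + r]'(by omega) = T[a + r]'(by omega) := by
            calc T[a₀ + r]'(by omega) = T[(a₀ + r) + p * (a / p)]'(by omega) :=
              periodShift hp ⟨a / p, rfl⟩ (by omega)
            _ = T[a + r]'(by omega) := gcIdx (by omega) (by omega)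
          have hmeq : m = p * (m / p) + r := by
            rw [hrdef]; exact (Nat.div_add_mod m p).symm
          have s3 : T[a₀]'(by omega) = T[a₀ + m]'(by omega) := h1 a₀ (by omega)
          have s4 : T[a₀ + r]'(by omega) = T[a₀ + m]'(by omega) := by
            calc T[a₀ + r]'(by omega) = T[(a₀ + r) + p * (m / p)]'(by omega) :=
              periodShift hp ⟨m / p, rfl⟩ (by omega)
            _ = T[a₀ + m]'(by omega) := gcIdx (by omega) (by omega)
          have goal : T[a]'(by omega) = T[a + r]'(by omega) :=
            s1.symm.trans (s3.trans (s4.symm.trans s2))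
          simpa using goal
        have := hmin r hrper
        have : r < p := Nat.mod_lt m hp0
        omega
      have hpm : p ∣ m := Nat.dvd_of_mod_eq_zero hr0
      obtain ⟨k, hk⟩ := hpm
      refine ⟨k, ?_, by rw [hk, mul_comm]⟩
      have : k * p ≤ d := by rw [mul_comm, ← hk]; exact hmd
      have hdp : d / p * p = d := Nat.div_mul_cancel hdvd
      by_contra hkk
      push_neg at hkk
      have : d / p + 1 ≤ k := hkk
      nlinarith [hp0]
  · rintro ⟨k, hk, rfl⟩
    have hkd : k * p ≤ d := by
      calc k * p ≤ (d / p) * p := Nat.mul_le_mul_right p hk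
      _ ≤ d := Nat.div_mul_le_self d p
    set m := k * p with hmdef
    have hpm : p ∣ m := ⟨k, by rw [hmdef]; ring⟩
    have hpe : p ∣ (d - m) := Nat.dvd_sub hdvd hpm
    unfold occursAt
    rw [List.prefix_iff_eq_take]
    apply List.ext_getElem
    · simp [hlen', hT]; omega
    · intro x h1 h2
      have hxn : x < n := by rwa [hT] at h1
      rw [List.getElem_take, List.getElem_drop]
      by_cases hc : m + x < d
      · rw [hT'get1 (m + x) (by omega)]
        calc T[x]'(by omega) = T[x + m]'(by omega) := periodShift hp hpm (by omega)
        _ = T[m + x]'(by omega) := gcIdx (by omega) (by omega)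
      · rw [hT'get2 (m + x) (by omega) (by omega)]
        calc T[x]'(by omega) = T[(x - (d - m)) + (d - m)]'(by omega) := gcIdx (by omega) (by omega)
        _ = T[x - (d - m)]'(by omega) := (periodShift hp hpe (by omega)).symm
        _ = T[m + x - d]'(by omega) := gcIdx (by omega) (by omega)
end

section
/- Let T be a string of length n over an alphabet Σ, let i, j ∈ [0, n) with i ≥ j, and let T' = T[0..i]·T[j..n-1]. If T occurs at position j' of T' with j' > 0, then j' is a period of the prefix T'[0..i+j'] of T'; that is, T'[a] = T'[a + j'] for all a ∈ [0, i + 1). -/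
universe u

/-- If `T` occurs at position `j' > 0` of `T'`, then `j'` is a period of the prefix
`T'[0..i+j']` of `T'`, i.e. `T'[a] = T'[a+j']` for all `a ∈ [0, i+1)`. -/
theorem stmt5 {α : Type u} (T : List α) (n i j : ℕ)
    (hT : T.length = n) (hi : i < n) (hj : j < n) (hij : j ≤ i)
    (T' : List α) (hT' : T' = T.take (i + 1) ++ T.drop j)
    (j' : ℕ) (hj'0 : 0 < j') (hocc : occursAt T T' j') :
    IsPeriod (T'.take (i + j' + 1)) j' := by
  refine ⟨hj'0, fun a h => ?_⟩
  have hlen : (T'.take (i + j' + 1)).length ≤ i + j' + 1 := by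
    simpa using List.length_take_le _ _
  have hlen' : (T'.take (i + j' + 1)).length ≤ T'.length := by
    simpa using List.length_take_le' _ _
  have ha : a ≤ i := by omega
  have haT' : a + j' < T'.length := lt_of_lt_of_le h hlen'
  have haT'2 : a < T'.length := by omega
  simp only [List.get_eq_getElem, List.getElem_take]
  -- T'[a] = T[a]
  have h1 : T'[a]'haT'2 = T[a]'(by omega) := by
    subst hT'
    rw [List.getElem_append_left (by simp; omega)]
    simp
  -- T'[a + j'] = T[a]
  have h2 : T'[a + j']'haT' = T[a]'(by omega) := by
    have e1 : T'[a + j']'haT' = (T'.drop j')[a]'(by simp; omega) := by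
      rw [List.getElem_drop]
      congr 1
      omega
    have ha' : a < T.length := by omega
    rw [e1]; exact (hocc.getElem ha').symm
  rw [h1, h2]
end

section
/- Let T be a string of length n over an alphabet Σ, let i, j ∈ [0, n) with i ≥ j, and let T' = T[0..i]·T[j..n-1]. If T occurs at position j' of T' with ending position i' = j' + n - 1 < |T'| - 1, then q = |T'| - i' - 1 is a period of the suffix T'[i+1-q .. |T'|-1] of T'; that is, T'[a] = T'[a + q] for all a with i + 1 - q ≤ a and a + q ≤ |T'| - 1. -/
universe u

/-- If `T` occurs at position `j'` of `T'` with ending position `i' = j' + n - 1 < |T'| - 1`,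
then `q = |T'| - i' - 1` is a period of the suffix `T'[i+1-q .. |T'|-1]` of `T'`. -/
theorem stmt6 {α : Type u} (T : List α) (n i j : ℕ)
    (hT : T.length = n) (hi : i < n) (hj : j < n) (hij : j ≤ i)
    (T' : List α) (hT' : T' = T.take (i + 1) ++ T.drop j)
    (j' : ℕ) (hocc : occursAt T T' j')
    (i' : ℕ) (hi' : i' = j' + n - 1) (hlt : i' < T'.length - 1)
    (q : ℕ) (hq : q = T'.length - i' - 1) :
    IsPeriod (T'.drop (i + 1 - q)) q := by
  have hlenT' : T'.length = i + 1 + (n - j) := by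
    subst hT'
    simp [hT]
    omega
  have hjn : n ≤ T'.length - j' := by
    have := hocc.length_le
    simpa [hT] using this
  have hq' : j' + j + q = i + 1 := by omega
  refine ⟨by omega, ?_⟩
  intro a h
  have hlen2 : a + q < T'.length - (i + 1 - q) := by simpa using h
  have hja : j + a < n := by omega
  simp only [List.get_eq_getElem, List.getElem_drop]
  have e1 : i + 1 - q + a = j' + (j + a) := by omega
  have e2 : i + 1 - q + (a + q) = i + 1 + a := by omega
  have hL : T'[i + 1 - q + a]'(by omega) = T[j + a]'(by omega) := by
    have h1 : T'[j' + (j + a)]'(by omega) = (T'.drop j')[j + a]'(by simp <;> omega) := by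
      rw [List.getElem_drop]
    have h2 : (T'.drop j')[j + a]'(by simp <;> omega) = T[j + a]'(by omega) :=
      (hocc.getElem (i := j + a) (by omega)).symm
    simp only [e1, h1, h2]
  have hR : T'[i + 1 - q + (a + q)]'(by omega) = T[j + a]'(by omega) := by
    have h3 : T'[i + 1 + a]'(by omega) = (T.drop j)[a]'(by simp [hT] <;> omega) := by
      subst hT'
      rw [List.getElem_append_right (by simp <;> omega)]
      congr 1
      simp only [List.length_take]
      omega
    have h4 : (T.drop j)[a]'(by simp [hT] <;> omega) = T[j + a]'(by omega) := by
      rw [List.getElem_drop]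
    simp only [e2, h3, h4]
  rw [hL, hR]
end

section
/- Let T be a string of length n over an alphabet Σ, let i, j ∈ [0, n) with i ≥ j, and let T' = T[0..i]·T[j..n-1]. If T occurs at position j' of T' with 0 < j' and j' + n < |T'|, then g = gcd(j', |T'| - j' - n) is a period of T, g divides i - j + 1, and g < i - j + 1 (hence per(T) ≤ g < i - j + 1). -/
universe u

lemma reach_aux (p d g x y : ℕ) (hd : 0 < d) (hg : g = Nat.gcd p d)
    (hx : x < d) (hy : y < d) (hxy : x % g = y % g) :
    ∃ k : ℕ, (x + k * p) % d = y := by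
  have hdvd : (g : ℤ) ∣ (y : ℤ) - (x : ℤ) := by
    have h2 : (x : ℤ) % g = (y : ℤ) % g := by
      rw [← Int.natCast_mod, ← Int.natCast_mod]; exact_mod_cast hxy
    exact Int.ModEq.dvd h2
  obtain ⟨t, ht⟩ := hdvd
  set A := Int.gcdA p d with hA
  set B := Int.gcdB p d with hB
  have hbez : (g : ℤ) = p * A + d * B := by
    rw [hg]
    have h := Int.gcd_eq_gcd_ab (p : ℤ) (d : ℤ)
    rw [Int.gcd_natCast_natCast] at h
    exact_mod_cast h
  have hdz : (0:ℤ) < d := by exact_mod_cast hd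
  set K : ℤ := (t * A) % d with hK
  have hK0 : 0 ≤ K := Int.emod_nonneg _ (by omega)
  refine ⟨K.toNat, ?_⟩
  have hcast : ((x + K.toNat * p : ℕ) : ℤ) = x + K * p := by
    push_cast [Int.toNat_of_nonneg hK0]; ring
  have hmod : ((x:ℤ) + K * p) % d = (y:ℤ) % d := by
    have h1 : K % d = (t * A) % d := by
      rw [hK]; exact Int.emod_emod_of_dvd _ dvd_rfl
    have h1' : K ≡ t * A [ZMOD (d:ℤ)] := h1
    have h2 : ((x:ℤ) + K * p) % d = ((x:ℤ) + (t*A) * p) % d :=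
      (Int.ModEq.refl (x:ℤ)).add (h1'.mul_right p)
    have h3 : (x:ℤ) + (t * A) * p = y + (-(t * B)) * d := by
      have ht' : (y:ℤ) - x = g * t := ht
      rw [hbez] at ht'
      linear_combination -ht'
    rw [h2, h3, Int.add_mul_emod_self_right]
  have hy' : (y:ℤ) % d = y := Int.emod_eq_of_lt (by positivity) (by exact_mod_cast hy)
  have hfin : (((x + K.toNat * p) % d : ℕ) : ℤ) = (y : ℤ) := by
    rw [Int.natCast_mod, hcast, hmod, hy']
  exact_mod_cast hfin


/-- If `T` occurs at position `j'` of `T'` with `0 < j'` and `j' + n < |T'|`, then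
`g = gcd(j', |T'| - j' - n)` is a period of `T`, `g` divides `i - j + 1`, and
`g < i - j + 1` (hence `per(T) ≤ g < i - j + 1`). -/
theorem stmt8 {α : Type u} (T : List α) (n i j : ℕ)
    (hT : T.length = n) (hi : i < n) (hj : j < n) (hij : j ≤ i)
    (T' : List α) (hT' : T' = T.take (i + 1) ++ T.drop j)
    (j' : ℕ) (hj'0 : 0 < j') (hocc : occursAt T T' j') (hlt : j' + n < T'.length)
    (g : ℕ) (hg : g = Nat.gcd j' (T'.length - j' - n)) :
    IsPeriod T g ∧ g ∣ (i - j + 1) ∧ g < i - j + 1 ∧ minPeriod T ≤ g := by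
  have hlenT' : T'.length = n + (i + 1 - j) := by
    subst hT'; simp [List.length_take, List.length_drop, hT]; omega
  set d := i + 1 - j with hd
  have hdpos : 0 < d := by omega
  set p := j' with hp
  set q := T'.length - j' - n with hqdef
  have hq : q = d - p := by omega
  have hp_lt : p < d := by omega
  have hpq : p + q = d := by omega
  have hq0 : 0 < q := by omega
  have hgd : g = Nat.gcd p d := by
    rw [hg, ← hpq, Nat.add_comm p q, Nat.gcd_add_self_right]
  have hgp : g ∣ p := by rw [hg]; exact Nat.gcd_dvd_left _ _
  have hgq : g ∣ q := by rw [hg]; exact Nat.gcd_dvd_right _ _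
  have hg0 : 0 < g := by rw [hg]; exact Nat.gcd_pos_of_pos_left _ hj'0
  have htake : (T.take (i+1)).length = i + 1 := by
    simp [hT]; omega
  -- basic pointwise facts
  have hA' : ∀ a, a < i + 1 → T'[a]? = T[a]? := by
    intro a ha
    rw [hT', List.getElem?_append, htake, if_pos ha, List.getElem?_take, if_pos ha]
  have hB' : ∀ c, T'[i + 1 + c]? = T[j + c]? := by
    intro c
    rw [hT', List.getElem?_append_right (by rw [htake]; omega), htake,
      List.getElem?_drop]
    congr 1; omega
  have hoccE : ∀ b, b < n → T'[p + b]? = T[b]? := by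
    obtain ⟨s, hs⟩ := hocc
    intro b hb
    rw [← List.getElem?_drop, ← hs, List.getElem?_append, hT, if_pos hb]
  -- the two period facts
  have hA : ∀ a, a + p ≤ i → T[a]? = T[a + p]? := by
    intro a ha
    have h1 := hoccE a (by omega)
    have h2 := hA' (p + a) (by omega)
    rw [← h1, h2, Nat.add_comm p a]
  have hB : ∀ a, j ≤ a → a + q < n → T[a]? = T[a + q]? := by
    intro a hja han
    have h1 := hoccE (a + q) (by omega)
    have h2 := hB' (a - j)
    have heq : p + (a + q) = i + 1 + (a - j) := by omega
    have heq2 : j + (a - j) = a := by omega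
    rw [heq] at h1
    rw [heq2] at h2
    rw [← h2, h1]
  -- one step inside the window
  have hstep : ∀ x, x < d → T[j + x]? = T[j + (x + p) % d]? := by
    intro x hx
    by_cases hcase : x + p < d
    · rw [Nat.mod_eq_of_lt hcase]
      have h := hA (j + x) (by omega)
      rw [h]; congr 1; omega
    · have hxq : q ≤ x := by omega
      have hmod : (x + p) % d = x - q := by
        have hxp : x + p = (x - q) + d := by omega
        rw [hxp, Nat.add_mod_right, Nat.mod_eq_of_lt (by omega)]
      rw [hmod]
      have h := hB (j + (x - q)) (by omega) (by omega)
      have he : j + (x - q) + q = j + x := by omega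
      rw [he] at h
      exact h.symm
  -- iterate the step
  have hiter : ∀ k x, x < d → T[j + x]? = T[j + (x + k * p) % d]? := by
    intro k
    induction k with
    | zero => intro x hx; simp [Nat.mod_eq_of_lt hx]
    | succ k ih =>
      intro x hx
      rw [ih x hx]
      have h2 := hstep ((x + k * p) % d) (Nat.mod_lt _ hdpos)
      rw [h2, Nat.mod_add_mod]
      congr 2
      ring_nf
  -- mod-subtraction helper
  have hmodsub : ∀ b c : ℕ, j ≤ b → j ≤ c → b % g = c % g →
      (b - j) % g = (c - j) % g := by
    intro b c hb hc h
    rcases le_total b c with hle | hle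
    · have hdv : g ∣ c - b := (Nat.modEq_iff_dvd' hle).mp h
      have : (b - j) ≡ (c - j) [MOD g] := by
        rw [Nat.modEq_iff_dvd' (by omega)]
        rwa [show c - j - (b - j) = c - b by omega]
      exact this
    · have hdv : g ∣ b - c := (Nat.modEq_iff_dvd' hle).mp h.symm
      have : (c - j) ≡ (b - j) [MOD g] := by
        rw [Nat.modEq_iff_dvd' (by omega)]
        rwa [show b - j - (c - j) = b - c by omega]
      exact this.symm
  -- window lemma
  have hwin : ∀ b c : ℕ, j ≤ b → b < j + d → j ≤ c → c < j + d →
      b % g = c % g → T[b]? = T[c]? := by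
    intro b c hb1 hb2 hc1 hc2 hbc
    obtain ⟨k, hk⟩ := reach_aux p d g (b - j) (c - j) hdpos hgd
      (by omega) (by omega) (hmodsub b c hb1 hc1 hbc)
    have h := hiter k (b - j) (by omega)
    rw [hk] at h
    rw [show j + (b - j) = b by omega, show j + (c - j) = c by omega] at h
    exact h
  -- normalization from below
  have hlow : ∀ m a : ℕ, j - a ≤ m → a ≤ j →
      ∃ b, j ≤ b ∧ b < j + d ∧ b % g = a % g ∧ T[a]? = T[b]? := by
    intro m
    induction m with
    | zero =>
      intro a h1 h2
      have : a = j := by omega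
      subst this
      exact ⟨a, le_rfl, by omega, rfl, rfl⟩
    | succ m ih =>
      intro a h1 h2
      by_cases hc : a = j
      · subst hc; exact ⟨a, le_rfl, by omega, rfl, rfl⟩
      · have haj : a < j := by omega
        have hstepA := hA a (by omega)
        obtain ⟨u, hu⟩ := hgp
        have hmp : (a + p) % g = a % g := by
          rw [hu, Nat.add_mul_mod_self_left]
        by_cases hc2 : a + p ≤ j
        · obtain ⟨b, hb1, hb2, hb3, hb4⟩ := ih (a + p) (by omega) hc2
          exact ⟨b, hb1, hb2, by rw [hb3, hmp], by rw [hstepA]; exact hb4⟩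
        · exact ⟨a + p, by omega, by omega, hmp, hstepA⟩
  -- normalization from above
  have hhigh : ∀ m a : ℕ, a ≤ m → j ≤ a → a < n →
      ∃ b, j ≤ b ∧ b < j + d ∧ b % g = a % g ∧ T[a]? = T[b]? := by
    intro m
    induction m with
    | zero =>
      intro a h1 h2 h3
      refine ⟨a, h2, by omega, rfl, rfl⟩
    | succ m ih =>
      intro a h1 h2 h3
      by_cases hc : a < j + d
      · exact ⟨a, h2, hc, rfl, rfl⟩
      · have hge : j + d ≤ a := by omega
        have hstepB := hB (a - q) (by omega) (by omega)
        rw [show a - q + q = a by omega] at hstepB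
        obtain ⟨u, hu⟩ := hgq
        have hmq : (a - q) % g = a % g := by
          have h5 : (a - q + q) % g = (a - q) % g := by
            rw [hu, Nat.add_mul_mod_self_left]
          rw [show a - q + q = a by omega] at h5
          exact h5.symm
        obtain ⟨b, hb1, hb2, hb3, hb4⟩ := ih (a - q) (by omega) (by omega) (by omega)
        exact ⟨b, hb1, hb2, by rw [hb3, hmq], by rw [← hstepB]; exact hb4⟩
  have hnorm : ∀ a : ℕ, a < n →
      ∃ b, j ≤ b ∧ b < j + d ∧ b % g = a % g ∧ T[a]? = T[b]? := by
    intro a ha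
    rcases le_or_gt j a with h | h
    · exact hhigh a a le_rfl h ha
    · obtain ⟨b, hb1, hb2, hb3, hb4⟩ := hlow j a (by omega) (by omega)
      exact ⟨b, hb1, hb2, hb3, hb4⟩
  -- g is a period
  have hper : IsPeriod T g := by
    refine ⟨hg0, ?_⟩
    intro a h
    have han : a + g < n := by rwa [hT] at h
    obtain ⟨b, hb1, hb2, hb3, hb4⟩ := hnorm a (by omega)
    obtain ⟨c, hc1, hc2, hc3, hc4⟩ := hnorm (a + g) han
    have hmod : b % g = c % g := by
      rw [hb3, hc3, Nat.add_mod_right]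
    have hw := hwin b c hb1 hb2 hc1 hc2 hmod
    have hfin : T[a]? = T[a + g]? := by rw [hb4, hw, ← hc4]
    rw [List.getElem?_eq_getElem (by omega : a < T.length),
      List.getElem?_eq_getElem h] at hfin
    simpa [List.get_eq_getElem] using Option.some.inj hfin
  have hdvd : g ∣ i - j + 1 := by
    rw [show i - j + 1 = d by omega, ← hpq]
    exact Nat.dvd_add hgp hgq
  have hlt2 : g < i - j + 1 := by
    have : g ≤ p := Nat.le_of_dvd hj'0 hgp
    omega
  refine ⟨hper, hdvd, hlt2, Nat.sInf_le hper⟩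
end

section
/- Let T be a string of length n over an alphabet Σ, let i, j ∈ [0, n) with i ≥ j, and let T' = T[0..i]·T[j..n-1]. If p > 0 is a period of T and p divides i - j + 1, then p is also a period of T'; that is, T'[a] = T'[a + p] for all a ∈ [0, |T'| - p). -/
universe u

lemma period_mul {α : Type u} {T : List α} {p : ℕ} (hp : IsPeriod T p) :
    ∀ (k a : ℕ) (h : a + k * p < T.length),
      T[a]'(by omega) = T[a + k * p]'h := by
  intro k
  induction k with
  | zero => intro a h; simp
  | succ k ih =>
    intro a h
    have h1 : a + p < T.length := by nlinarith [hp.1]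
    have := hp.2 a h1
    simp only [List.get_eq_getElem] at this
    rw [this]
    have h2 : a + p + k * p < T.length := by nlinarith
    rw [ih (a + p) h2]
    congr 1
    ring

/-- If `p > 0` is a period of `T` and `p` divides `i - j + 1`, then `p` is also a period of
`T' = T[0..i]·T[j..n-1]`. -/
theorem stmt9 {α : Type u} (T : List α) (n i j : ℕ)
    (hT : T.length = n) (hi : i < n) (hj : j < n) (hij : j ≤ i)
    (T' : List α) (hT' : T' = T.take (i + 1) ++ T.drop j)
    (p : ℕ) (hp : IsPeriod T p) (hdvd : p ∣ (i - j + 1)) :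
    IsPeriod T' p := by
  subst hT'
  obtain ⟨q, hq⟩ := hdvd
  have hq1 : 1 ≤ q := by rcases q with _ | q <;> omega
  have hpd : p ≤ i - j + 1 := by nlinarith [hp.1]
  refine ⟨hp.1, fun a h => ?_⟩
  have hlen : (T.take (i+1) ++ T.drop j).length = (i+1) + (n - j) := by
    simp [hT]; omega
  have h' : a + p < (i+1) + (n - j) := hlen ▸ h
  simp only [List.get_eq_getElem, List.getElem_append, List.length_take, hT,
    List.getElem_take, List.getElem_drop]
  have hmin : min (i+1) n = i + 1 := by omega
  simp only [hmin]
  split <;> split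
  · -- a < i+1, a+p < i+1
    have hb : a + p < T.length := by omega
    have := hp.2 a hb
    simpa using this
  · -- a < i+1, a+p ≥ i+1
    rename_i h1 h2
    obtain ⟨m, rfl⟩ : ∃ m, q = m + 1 := ⟨q - 1, by omega⟩
    obtain ⟨c, hc⟩ : ∃ c, c = m * p := ⟨_, rfl⟩
    have hd : i - j + 1 = c + p := by rw [hq, hc]; ring
    have hb : j + (a + p - (i + 1)) + m * p < T.length := by
      rw [← hc, hT]; omega
    have key := period_mul hp m (j + (a + p - (i + 1))) hb
    rw [key]
    congr 1
    rw [← hc]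
    omega
  · omega
  · -- both ≥ i+1
    rename_i h1 h2
    have hb : (j + (a - (i+1))) + p < T.length := by omega
    have := hp.2 (j + (a - (i+1))) hb
    simp only [List.get_eq_getElem] at this
    rw [this]
    congr 1
    omega
end

section
/- Let T be a string of length n over an alphabet Σ, let i, j ∈ [0, n) with i ≥ j, and let T' = T[0..i]·T[j..n-1]. If T is periodic with smallest period p = per(T) satisfying p < i - j + 1 and p dividing i - j + 1, then every position at which T occurs in T' is a multiple of p. -/
universe u

/-- If `T` is periodic with `p = per(T) < i-j+1` and `p ∣ i-j+1`, then every position at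
which `T` occurs in `T'` is a multiple of `p`. -/
theorem stmt10 {α : Type u} (T : List α) (n i j : ℕ)
    (hT : T.length = n) (hi : i < n) (hj : j < n) (hij : j ≤ i)
    (T' : List α) (hT' : T' = T.take (i + 1) ++ T.drop j)
    (hper : 2 * minPeriod T ≤ n) (hlt : minPeriod T < i - j + 1)
    (hdvd : minPeriod T ∣ (i - j + 1)) :
    ∀ k : ℕ, occursAt T T' k → minPeriod T ∣ k := by
  subst hT hT'
  set p := minPeriod T with hpdef
  have hn : 0 < T.length := by omega
  have hTlenper : IsPeriod T T.length := ⟨hn, fun a h => absurd h (by omega)⟩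
  have hpmem : IsPeriod T p :=
    Nat.sInf_mem (s := {q | IsPeriod T q}) ⟨T.length, hTlenper⟩
  have hp : 0 < p := hpmem.1
  haveI : NeZero p := ⟨hp.ne'⟩
  have hple : p ≤ T.length := by omega
  -- every index agrees with its residue mod p
  have hmod : ∀ x (hx : x < T.length),
      T[x]'hx = T[x % p]'(lt_of_lt_of_le (Nat.mod_lt x hp) hple) := by
    intro x
    induction x using Nat.strong_induction_on with
    | _ x ih =>
      intro hx
      rcases lt_or_ge x p with h | h
      · congr 1
        exact (Nat.mod_eq_of_lt h).symm
      · have h1 : x - p + p < T.length := by omega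
        have h2 := hpmem.2 (x - p) h1
        simp only [List.get_eq_getElem] at h2
        have h4 := ih (x - p) (by omega) (by omega)
        have h5 : T[x]'hx = T[x - p]'(by omega) := by
          rw [h2]; congr 1; omega
        rw [h5, h4]
        congr 1
        exact (Nat.mod_eq_sub_mod h).symm
  obtain ⟨c, hc⟩ := hdvd
  have hlenTake : (T.take (i + 1)).length = i + 1 := by
    simp; omega
  have hlenT' : (T.take (i + 1) ++ T.drop j).length = T.length + (i - j + 1) := by
    simp; omega
  -- values of T'
  have hT'val : ∀ a (ha : a < T.length + (i - j + 1)),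
      (T.take (i + 1) ++ T.drop j)[a]'(by omega) =
        T[a % p]'(lt_of_lt_of_le (Nat.mod_lt a hp) hple) := by
    intro a ha
    rcases lt_or_ge a (i + 1) with h | h
    · rw [List.getElem_append_left (by omega : a < (T.take (i+1)).length)]
      rw [List.getElem_take]
      exact hmod a (by omega)
    · rw [List.getElem_append_right (by omega : (T.take (i+1)).length ≤ a)]
      have h6 : j + (a - (T.take (i+1)).length) < T.length := by
        rw [hlenTake]; omega
      rw [List.getElem_drop, hmod _ h6]
      have h7 : (j + (a - (T.take (i+1)).length)) + p * c = a := by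
        rw [hlenTake]; omega
      congr 1
      conv_rhs => rw [← h7]
      rw [Nat.add_mul_mod_self_left]
  intro k hk
  unfold occursAt at hk
  have hklen := hk.length_le
  rw [List.length_drop, hlenT'] at hklen
  have hkle : k ≤ i - j + 1 := by omega
  -- occurrence relation on residues
  have hocc : ∀ m (hm : m < T.length),
      T[m]'hm = T[(k + m) % p]'(lt_of_lt_of_le (Nat.mod_lt _ hp) hple) := by
    intro m hm
    have h9 := hk.getElem hm
    rw [List.getElem_drop] at h9
    exact h9.trans (hT'val (k + m) (by omega))
  by_contra hndvd
  set g := Nat.gcd p k with hg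
  have hgp : g ∣ p := Nat.gcd_dvd_left p k
  have hgk : g ∣ k := Nat.gcd_dvd_right p k
  have hgpos : 0 < g := Nat.gcd_pos_of_pos_left k hp
  have hgne : g ≠ p := fun h => hndvd (h ▸ hgk)
  have hglt : g < p := lt_of_le_of_ne (Nat.le_of_dvd hp hgp) hgne
  -- the cycle function
  set F : ZMod p → α := fun z => T[z.val]'(lt_of_lt_of_le (ZMod.val_lt z) hple) with hF
  have hF1 : ∀ z : ZMod p, F z = F (z + (k : ZMod p)) := by
    intro z
    have hv : z.val < T.length := lt_of_lt_of_le (ZMod.val_lt z) hple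
    have h10 := hocc z.val hv
    simp only [hF]
    convert h10 using 2
    rw [ZMod.val_add, ZMod.val_natCast, Nat.add_mod_mod, Nat.add_comm]
  have hF2 : ∀ (t : ℤ) (z : ZMod p), F z = F (z + (t : ZMod p) * (k : ZMod p)) := by
    intro t
    induction t using Int.induction_on with
    | zero => simp
    | succ t ih =>
      intro z
      have h12 : z + ((t : ℤ) : ZMod p) * (k : ZMod p) + (k : ZMod p)
          = z + (((t : ℤ) + 1 : ℤ) : ZMod p) * (k : ZMod p) := by push_cast; ring
      rw [ih z, hF1 (z + ((t : ℤ) : ZMod p) * (k : ZMod p)), h12]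
    | pred t ih =>
      intro z
      have h12 : z + ((-t - 1 : ℤ) : ZMod p) * (k : ZMod p) + (k : ZMod p)
          = z + ((-t : ℤ) : ZMod p) * (k : ZMod p) := by push_cast; ring
      rw [ih z, ← h12, ← hF1]
  have hab := Nat.gcd_eq_gcd_ab p k
  have hcast : (g : ZMod p) = ((Nat.gcdB p k : ℤ) : ZMod p) * (k : ZMod p) := by
    have h13 : ((g : ℤ) : ZMod p)
        = (((p : ℤ) * Nat.gcdA p k + (k : ℤ) * Nat.gcdB p k : ℤ) : ZMod p) := by
      rw [hg, hab]
    push_cast at h13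
    rw [ZMod.natCast_self] at h13
    rw [h13]
    ring
  have hF3 : ∀ z : ZMod p, F z = F (z + (g : ZMod p)) := by
    intro z
    rw [hcast]
    exact hF2 _ z
  have hgper : IsPeriod T g := by
    refine ⟨hgpos, fun a h => ?_⟩
    simp only [List.get_eq_getElem]
    rw [hmod a (by omega), hmod (a + g) h]
    have h14 := hF3 ((a : ℕ) : ZMod p)
    simp only [hF] at h14
    rw [← Nat.cast_add] at h14
    convert h14 using 2 <;> rw [ZMod.val_natCast]
  have h15 : p ≤ g := Nat.sInf_le (s := {q | IsPeriod T q}) hgper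
  omega
end

section
/- Let T be a string of length n over an alphabet Σ, let i, j ∈ [0, n) with i ≥ j, and let T' = T[0..i]·T[j..n-1]. Then T occurs at position |T'| - n = i - j + 1 of T' (i.e., T is a suffix of T') if and only if T[0..j-1] is a suffix of T[0..i], i.e., if and only if the longest common suffix of the prefixes T[0..j-1] and T[0..i] of T has length equal to j. -/
universe u

/-- `T` occurs at position `|T'| - n = i - j + 1` of `T'` (i.e. `T` is a suffix of `T'`) iff
`T[0..j-1]` is a suffix of `T[0..i]`. -/
theorem stmt12 {α : Type u} (T : List α) (n i j : ℕ)
    (hT : T.length = n) (hi : i < n) (hj : j < n) (hij : j ≤ i)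
    (T' : List α) (hT' : T' = T.take (i + 1) ++ T.drop j) :
    occursAt T T' (i - j + 1) ↔ T.take j <:+ T.take (i + 1) := by
  unfold occursAt
  subst hT' hT
  have hlen : (T.take (i+1)).length = i + 1 := List.length_take_of_le (by omega)
  have hd : (T.take (i+1) ++ T.drop j).drop (i - j + 1)
      = (T.take (i+1)).drop (i - j + 1) ++ T.drop j := by
    rw [List.drop_append, hlen]
    have : i - j + 1 - (i + 1) = 0 := by omega
    rw [this, List.drop_zero]
  rw [hd]
  have hlen2 : ((T.take (i+1)).drop (i - j + 1) ++ T.drop j).length = T.length := by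
    simp [hlen]; omega
  constructor
  · intro h
    have heq := h.eq_of_length (by omega)
    rw [List.suffix_iff_eq_drop, hlen, List.length_take_of_le (by omega)]
    have : i + 1 - j = i - j + 1 := by omega
    rw [this]
    have heq2 : T.take j ++ T.drop j = (T.take (i+1)).drop (i - j + 1) ++ T.drop j := by
      rw [List.take_append_drop]; exact heq
    exact List.append_cancel_right heq2
  · intro h
    rw [List.suffix_iff_eq_drop, hlen, List.length_take_of_le (by omega)] at h
    have : i + 1 - j = i - j + 1 := by omega
    rw [this] at h
    rw [← h, List.take_append_drop]
end
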